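/- arXiv:2301.01552 — 4 statements merged into one kernel-verified Lean document; each statement's English description precedes it below -/
import Mathlib

section
/- Let A be a principal ideal domain of characteristic 0 with fraction field 𝕜, and K a finite extension of 𝕜 of degree n ≥ 3. Let α ∈ K with 𝕜(α) = K, and let f_α = a₀Xⁿ + a₁X^{n−1} + ⋯ + aₙ ∈ A[X] be a primitive minimal polynomial of α (i.e., gcd(a₀,…,aₙ) = 1). Then A_α is the free A-module with basis 1, ω₁, …, ω_{n−1}, where ω_i := a₀α^i + a₁α^{i−1} + ⋯ + a_{i−1}α for i = 1, …, n−1; that is, A_α = {x₀ + x₁ω₁ + ⋯ + x_{n−1}ω_{n−1} : x₀, …, x_{n−1} ∈ A}. -/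
noncomputable section

open Polynomial

variable (A : Type*) [CommRing A] [IsDomain A] [IsPrincipalIdealRing A] [CharZero A]
  (𝕜 : Type*) [Field 𝕜] [Algebra A 𝕜] [IsFractionRing A 𝕜]
  (K : Type*) [Field K] [Algebra 𝕜 K] [Algebra A K] [IsScalarTower A 𝕜 K]
  [FiniteDimensional 𝕜 K]

/-- The free `A`-module `M_α` generated by `1, α, …, α^(n-1)`, where `n` is the degree
of `α` over `𝕜`. -/
def MmodA (α : K) : Submodule A K :=
  Submodule.span A (Set.range fun i : Fin (minpoly 𝕜 α).natDegree => α ^ (i : ℕ))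

/-- The ring of scalars `A_α = {ξ ∈ K : ξ·M_α ⊆ M_α}` of `M_α`, as a subring of `K`. -/
def Aring (α : K) : Subring K where
  carrier := {ξ : K | ∀ m ∈ MmodA A 𝕜 K α, ξ * m ∈ MmodA A 𝕜 K α}
  one_mem' := by intro m hm; rw [one_mul]; exact hm
  mul_mem' := by intro a b ha hb m hm; rw [mul_assoc]; exact ha _ (hb _ hm)
  zero_mem' := by intro m hm; rw [zero_mul]; exact (MmodA A 𝕜 K α).zero_mem
  add_mem' := by
    intro a b ha hb m hm; rw [add_mul]; exact (MmodA A 𝕜 K α).add_mem (ha _ hm) (hb _ hm)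
  neg_mem' := by intro a ha m hm; rw [neg_mul]; exact (MmodA A 𝕜 K α).neg_mem (ha _ hm)

/-!
Each `ωᵢ` lies in `A_α`: from `ωᵢ₊₁ = α ωᵢ + aᵢ α` and `ωₙ = -aₙ` (as `f(α) = 0`), descending
induction on `i` shows `ωᵢ αᵏ ∈ M_α` for all `k < n`.

Conversely, `ξ ∈ A_α` lies in `M_α`, so `ξ = p(α)` with `p ∈ A[X]` of degree `m < n`. If `m ≥ 1`,
then `ξ α^(n-m) = q(α)` with `deg q < n`, so `p Xⁿ⁻ᵐ - q` has degree `≤ n` and vanishes at `α`.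
By Gauss's lemma the primitive `f` divides it, so `a₀` divides its `Xⁿ`-coefficient, which is the
leading coefficient of `p`. Subtracting the matching multiple of `ωₘ` lowers the degree.
-/

open Finset

section OmegaPoly

variable {R : Type*} [CommSemiring R] (f : R[X])

/-- `ωᵢ = (omegaPoly f i)(α)`: the paper's `aⱼ` is `f.coeff (f.natDegree - j)`. -/
def omegaPoly (i : ℕ) : R[X] :=
  ∑ j ∈ range i, C (f.coeff (f.natDegree - j)) * X ^ (i - j)

lemma omegaPoly_succ (i : ℕ) :
    omegaPoly f (i + 1) = omegaPoly f i * X + C (f.coeff (f.natDegree - i)) * X := by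
  rw [omegaPoly, omegaPoly, sum_range_succ, sum_mul, Nat.add_sub_cancel_left, pow_one]
  congr 1
  refine sum_congr rfl fun j hj => ?_
  rw [mul_assoc, ← pow_succ, Nat.sub_add_comm (mem_range.1 hj).le]

lemma omegaPoly_natDegree_add_C : omegaPoly f f.natDegree + C (f.coeff 0) = f := by
  have h := sum_range_reflect (fun k => C (f.coeff k) * X ^ k) (f.natDegree + 1)
  rw [sum_range_succ, ← as_sum_range_C_mul_X_pow] at h
  simpa [omegaPoly] using h

lemma natDegree_omegaPoly_le (i : ℕ) : (omegaPoly f i).natDegree ≤ i :=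
  natDegree_sum_le_of_forall_le _ _ fun _ _ => (natDegree_C_mul_X_pow_le _ _).trans (Nat.sub_le _ _)

lemma coeff_omegaPoly_self {i : ℕ} (hi : 0 < i) : (omegaPoly f i).coeff i = f.leadingCoeff := by
  rw [omegaPoly, finsetSum_coeff, sum_eq_single_of_mem 0 (mem_range.2 hi)]
  · simp
  · intro j hj hj0
    rw [coeff_C_mul_X_pow, if_neg]
    have := mem_range.1 hj
    omega

end OmegaPoly

section Lattice

variable {R F L : Type*} [CommRing R] [Field F] [Field L] [Algebra F L] [Algebra R L] {α : L}

lemma mem_MmodA_iff {x : L} :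
    x ∈ MmodA R F L α ↔ ∃ p : R[X], p.degree < (minpoly F α).natDegree ∧ aeval α p = x := by
  classical
  have : MmodA R F L α = (degreeLT R (minpoly F α).natDegree).map (aeval α).toLinearMap := by
    rw [MmodA, degreeLT_eq_span_X_pow, Submodule.map_span]
    congr 1
    ext y
    simp [Fin.exists_iff]
  simp [this, mem_degreeLT]

lemma aeval_mem_MmodA {p : R[X]} (hp : p.natDegree < (minpoly F α).natDegree) :
    aeval α p ∈ MmodA R F L α :=
  mem_MmodA_iff.2 ⟨p, degree_le_natDegree.trans_lt (by exact_mod_cast hp), rfl⟩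

lemma one_mem_MmodA (hα : IsIntegral F α) : (1 : L) ∈ MmodA R F L α := by
  simpa using aeval_mem_MmodA (R := R) (F := F) (α := α) (p := 1)
    (by rw [natDegree_one]; exact minpoly.natDegree_pos hα)

lemma mem_MmodA_of_mem_Aring (hα : IsIntegral F α) {ξ : L} (hξ : ξ ∈ Aring R F L α) :
    ξ ∈ MmodA R F L α := by
  simpa using hξ 1 (one_mem_MmodA hα)

lemma mem_Aring_of_forall_mul_pow_mem {ξ : L}
    (h : ∀ k < (minpoly F α).natDegree, ξ * α ^ k ∈ MmodA R F L α) : ξ ∈ Aring R F L α :=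
  fun _ hm => (Submodule.span_le (p := (MmodA R F L α).comap (LinearMap.mulLeft R ξ))).2
    (by rintro _ ⟨k, rfl⟩; exact h k k.2) hm

lemma algebraMap_mem_Aring (c : R) : algebraMap R L c ∈ Aring R F L α := fun _ hm => by
  rw [← Algebra.smul_def]
  exact Submodule.smul_mem _ c hm

variable {f : R[X]} (hroot : aeval α f = 0) (hdeg : f.natDegree = (minpoly F α).natDegree)
include hroot hdeg

lemma aeval_omegaPoly_mul_pow_mem {i : ℕ} (hi : i ≤ f.natDegree) {k : ℕ} (hk : k < f.natDegree) :
    aeval α (omegaPoly f i) * α ^ k ∈ MmodA R F L α := by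
  induction hi using Nat.decreasingInduction generalizing k with
  | self =>
    have htop : aeval α (omegaPoly f f.natDegree) = -aeval α (C (f.coeff 0)) := by
      rw [eq_neg_iff_add_eq_zero, ← map_add, omegaPoly_natDegree_add_C, hroot]
    rw [htop, neg_mul, ← aeval_X_pow (R := R), ← map_mul]
    exact neg_mem (aeval_mem_MmodA ((natDegree_C_mul_X_pow_le _ _).trans_lt (hdeg ▸ hk)))
  | of_succ i hi ih =>
    cases k with
    | zero =>
      rw [pow_zero, mul_one]
      exact aeval_mem_MmodA ((natDegree_omegaPoly_le f i).trans_lt (hdeg ▸ hi))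
    | succ k =>
      have hrec : aeval α (omegaPoly f i) * α ^ (k + 1) = aeval α (omegaPoly f (i + 1)) * α ^ k -
          aeval α (C (f.coeff (f.natDegree - i)) * X ^ (k + 1)) := by
        simp only [omegaPoly_succ, map_add, map_mul, aeval_X, aeval_X_pow]
        ring
      rw [hrec]
      exact sub_mem (ih (by omega))
        (aeval_mem_MmodA ((natDegree_C_mul_X_pow_le _ _).trans_lt (hdeg ▸ hk)))

lemma aeval_omegaPoly_mem_Aring {i : ℕ} (hi : i ≤ f.natDegree) :
    aeval α (omegaPoly f i) ∈ Aring R F L α :=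
  mem_Aring_of_forall_mul_pow_mem fun _ hk =>
    aeval_omegaPoly_mul_pow_mem hroot hdeg hi (hdeg ▸ hk)

end Lattice

lemma Polynomial.leadingCoeff_dvd_coeff_of_dvd {R : Type*} [CommRing R] [IsDomain R] {f g : R[X]}
    (h : f ∣ g) (hg : g.natDegree ≤ f.natDegree) : f.leadingCoeff ∣ g.coeff f.natDegree := by
  obtain ⟨h, rfl⟩ := h
  rcases eq_or_ne (f * h) 0 with h0 | h0
  · simp [h0]
  obtain ⟨hf, hh⟩ := mul_ne_zero_iff.1 h0
  have hh0 : h.natDegree ≤ 0 := by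
    rw [natDegree_mul hf hh] at hg
    omega
  refine ⟨h.coeff 0, ?_⟩
  conv_lhs => rw [eq_C_of_natDegree_le_zero hh0, coeff_mul_C]
  rfl

section Gauss

variable {R F L : Type*} [CommRing R] [IsDomain R] [Field F] [Algebra R F] [IsFractionRing R F]
  [Field L] [Algebra F L] [Algebra R L] [IsScalarTower R F L] {α : L} {f : R[X]}

lemma Polynomial.IsPrimitive.isIntegral_of_aeval_eq_zero (hf : f.IsPrimitive)
    (hroot : aeval α f = 0) : IsIntegral F α :=
  (IsAlgebraic.extendScalars (IsFractionRing.injective R F) ⟨f, hf.ne_zero, hroot⟩).isIntegral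

variable [IsGCDMonoid R]

lemma Polynomial.IsPrimitive.dvd_of_aeval_eq_zero (hf : f.IsPrimitive) (hroot : aeval α f = 0)
    (hdeg : f.natDegree = (minpoly F α).natDegree) {g : R[X]} (hg : aeval α g = 0) : f ∣ g := by
  have hmin : ∀ {p : R[X]}, aeval α p = 0 → minpoly F α ∣ p.map (algebraMap R F) :=
    fun hp => minpoly.dvd F α (by rwa [aeval_map_algebraMap])
  have hf' : f.map (algebraMap R F) ≠ 0 :=
    (Polynomial.map_ne_zero_iff (IsFractionRing.injective R F)).2 hf.ne_zero
  have hfmin := eq_leadingCoeff_mul_of_monic_of_dvd_of_natDegree_le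
    (minpoly.monic (hf.isIntegral_of_aeval_eq_zero hroot)) (hmin hroot)
    (by rw [natDegree_map_eq_of_injective (IsFractionRing.injective R F), hdeg])
  refine hf.dvd_of_fraction_map_dvd_fraction_map (K := F) ?_
  rw [hfmin, C_mul_dvd (leadingCoeff_ne_zero.2 hf')]
  exact hmin hg

end Gauss

section Comb

variable {R F L : Type*} [CommRing R] [Field F] [Field L] [Algebra F L] [Algebra R L] {α : L}
  {f : R[X]}

variable (α f) in
def omegaComb (x : ℕ → R) : L :=
  algebraMap R L (x 0) + ∑ i ∈ Ico 1 f.natDegree, algebraMap R L (x i) * aeval α (omegaPoly f i)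

lemma omegaComb_add (x y : ℕ → R) :
    omegaComb α f (x + y) = omegaComb α f x + omegaComb α f y := by
  simp only [omegaComb, Pi.add_apply, map_add, add_mul, sum_add_distrib]
  ring

lemma omegaComb_single_zero (c : R) : omegaComb α f (Pi.single 0 c) = algebraMap R L c := by
  rw [omegaComb, Pi.single_eq_same, add_eq_left]
  refine sum_eq_zero fun i hi => ?_
  rw [Pi.single_eq_of_ne (by rw [mem_Ico] at hi; omega), map_zero, zero_mul]

lemma omegaComb_single {m : ℕ} (hm : m ∈ Ico 1 f.natDegree) (t : R) :
    omegaComb α f (Pi.single m t) = algebraMap R L t * aeval α (omegaPoly f m) := by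
  rw [omegaComb, Pi.single_eq_of_ne (by rw [mem_Ico] at hm; omega), map_zero, zero_add,
    sum_eq_single_of_mem m hm fun _ _ hi => by rw [Pi.single_eq_of_ne hi, map_zero, zero_mul],
    Pi.single_eq_same]

lemma omegaComb_mem_Aring (hroot : aeval α f = 0) (hdeg : f.natDegree = (minpoly F α).natDegree)
    (x : ℕ → R) : omegaComb α f x ∈ Aring R F L α :=
  add_mem (algebraMap_mem_Aring _) <| sum_mem fun _ hi => mul_mem (algebraMap_mem_Aring _)
    (aeval_omegaPoly_mem_Aring hroot hdeg (mem_Ico.1 hi).2.le)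

end Comb

section Descent

variable {R F L : Type*} [CommRing R] [IsDomain R] [IsGCDMonoid R] [Field F] [Algebra R F]
  [IsFractionRing R F] [Field L] [Algebra F L] [Algebra R L] [IsScalarTower R F L] {α : L}
  {f : R[X]} (hf : f.IsPrimitive) (hroot : aeval α f = 0)
  (hdeg : f.natDegree = (minpoly F α).natDegree)
include hf hroot hdeg

lemma leadingCoeff_dvd_coeff_of_mem_Aring {p : R[X]} {m : ℕ} (hpm : p.natDegree ≤ m)
    (hm : m ∈ Ico 1 f.natDegree) (hp : aeval α p ∈ Aring R F L α) :
    f.leadingCoeff ∣ p.coeff m := by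
  obtain ⟨hm0, hmn⟩ := mem_Ico.1 hm
  have hshift : aeval α (X ^ (f.natDegree - m)) ∈ MmodA R F L α :=
    aeval_mem_MmodA (by rw [natDegree_X_pow, ← hdeg]; omega)
  obtain ⟨q, hq, hqp⟩ := mem_MmodA_iff.1 (hp _ hshift)
  rw [← hdeg] at hq
  have hg : aeval α (p * X ^ (f.natDegree - m) - q) = 0 := by
    rw [map_sub, map_mul, hqp, sub_self]
  have hgdeg : (p * X ^ (f.natDegree - m) - q).natDegree ≤ f.natDegree := by
    refine (natDegree_sub_le _ _).trans (max_le (natDegree_mul_le.trans ?_) ?_)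
    · rw [natDegree_X_pow]; omega
    · exact natDegree_le_of_degree_le hq.le
  have := leadingCoeff_dvd_coeff_of_dvd (hf.dvd_of_aeval_eq_zero hroot hdeg hg) hgdeg
  rwa [coeff_sub, coeff_eq_zero_of_degree_lt hq, sub_zero,
    coeff_mul_X_pow', if_pos (Nat.sub_le _ _), Nat.sub_sub_self hmn.le] at this

lemma aeval_mem_range_omegaComb {p : R[X]} {m : ℕ} (hpm : p.natDegree ≤ m)
    (hmn : m < f.natDegree) (hp : aeval α p ∈ Aring R F L α) :
    aeval α p ∈ Set.range (omegaComb α f) := by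
  induction m generalizing p with
  | zero =>
    refine ⟨Pi.single 0 (p.coeff 0), ?_⟩
    rw [omegaComb_single_zero]
    conv_rhs => rw [eq_C_of_natDegree_le_zero hpm, aeval_C]
  | succ m ih =>
    have hm : m + 1 ∈ Ico 1 f.natDegree := mem_Ico.2 ⟨m.succ_pos, hmn⟩
    obtain ⟨t, ht⟩ := leadingCoeff_dvd_coeff_of_mem_Aring hf hroot hdeg hpm hm hp
    set p' := p - C t * omegaPoly f (m + 1)
    have hp'deg : p'.natDegree ≤ m := by
      refine natDegree_le_iff_coeff_eq_zero.2 fun N hN => ?_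
      rw [coeff_sub, coeff_C_mul]
      rcases (Nat.succ_le_of_lt hN).eq_or_lt with rfl | hN
      · rw [ht, coeff_omegaPoly_self f m.succ_pos, mul_comm, sub_self]
      · rw [coeff_eq_zero_of_natDegree_lt (hpm.trans_lt hN),
          coeff_eq_zero_of_natDegree_lt ((natDegree_omegaPoly_le f _).trans_lt hN), mul_zero,
          sub_zero]
    have hp' : aeval α p' ∈ Aring R F L α := by
      rw [map_sub, map_mul, aeval_C]
      exact sub_mem hp (mul_mem (algebraMap_mem_Aring t)
        (aeval_omegaPoly_mem_Aring hroot hdeg hmn.le))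
    obtain ⟨x, hx⟩ := ih hp'deg (by omega) hp'
    refine ⟨x + Pi.single (m + 1) t, ?_⟩
    rw [omegaComb_add, omegaComb_single hm, hx, map_sub, map_mul, aeval_C, sub_add_cancel]

theorem Aring_eq_range_omegaComb : (Aring R F L α : Set L) = Set.range (omegaComb α f) := by
  have hα : IsIntegral F α := hf.isIntegral_of_aeval_eq_zero hroot
  have hn : 0 < f.natDegree := hdeg ▸ minpoly.natDegree_pos hα
  ext ξ
  refine ⟨fun hξ => ?_, fun ⟨x, hx⟩ => hx ▸ omegaComb_mem_Aring hroot hdeg x⟩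
  obtain ⟨p, hp, rfl⟩ := mem_MmodA_iff.1 (mem_MmodA_of_mem_Aring hα hξ)
  refine aeval_mem_range_omegaComb hf hroot hdeg ?_ (Nat.sub_lt hn one_pos) hξ
  exact natDegree_le_iff_coeff_eq_zero.2 fun N hN =>
    (degree_lt_iff_coeff_zero _ _).1 (hdeg ▸ hp) N (by omega)

end Descent

theorem ring_of_scalars_eq_span_omega
    (α : K) (hα : Algebra.adjoin 𝕜 {α} = ⊤)
    (f : Polynomial A) (hfroot : aeval α f = 0)
    (hfdeg : f.natDegree = (minpoly 𝕜 α).natDegree) (hfprim : f.IsPrimitive) :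
    (Aring A 𝕜 K α : Set K) =
      {ξ : K | ∃ x : ℕ → A,
        ξ = algebraMap A K (x 0) + ∑ i ∈ Finset.Ico 1 (Module.finrank 𝕜 K),
          algebraMap A K (x i) *
            (∑ j ∈ Finset.range i,
              algebraMap A K (f.coeff (Module.finrank 𝕜 K - j)) * α ^ (i - j))} := by
  have hα' : IntermediateField.adjoin 𝕜 {α} = ⊤ :=
    (IntermediateField.adjoin_simple_eq_top_iff_of_isAlgebraic
      (IsIntegral.of_finite 𝕜 α).isAlgebraic).2 hα
  have hrank : Module.finrank 𝕜 K = f.natDegree :=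
    ((Field.primitive_element_iff_minpoly_natDegree_eq 𝕜 α).1 hα').symm.trans hfdeg.symm
  rw [hrank, Aring_eq_range_omegaComb hfprim hfroot hfdeg]
  ext ξ
  simp [omegaComb, omegaPoly, eq_comm]
end
end

section
/- Let A be a principal ideal domain of characteristic 0 with fraction field 𝕜, and K a finite extension of 𝕜 of degree n ≥ 3. Let α ∈ K with 𝕜(α) = K. Then A_α = A[α] ∩ A[α⁻¹]. -/
/-!
Let `P ∈ A[X]` be the primitive polynomial of degree `n` vanishing at `α`; by Gauss's lemma it
divides every polynomial over `A` that vanishes at `α`. Write `divX^[t] P` for the quotient of `P`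
by `X ^ t` (the remainder dropped). Each partial quotient `β_t = (divX^[t] P)(α)` is a scalar of
`M_α`: for `j < t`, `β_t α^j` is a polynomial in `α` of degree `< n`, and for `j ≥ t` Horner's
relation `α^t β_t = -(p₀ + ⋯ + p_{t-1} α^{t-1})` makes it one. Since `F ↦ divX^[s] F` is additive,
`A`-linear and undone by multiplication with `X`, every multiple `F` of `P` then has all its
partial quotients `(divX^[s] F)(α)` in `A_α`.

If `ξ = p(α) = q(α⁻¹)` with `e = deg q`, then `F = X^e p - X^e q(1/X)` vanishes at `α` and
`divX^[e] F = p - q(0)`, so `ξ ∈ A_α`. Conversely `ξ ∈ A_α` gives `ξ = ξ · 1 ∈ M_α ⊆ A[α]` and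
`ξ α^{n-1} ∈ M_α ⊆ α^{n-1} A[α⁻¹]`.
-/

noncomputable section

open Polynomial

variable (A : Type*) [CommRing A] [IsDomain A] [IsPrincipalIdealRing A] [CharZero A]
  (𝕜 : Type*) [Field 𝕜] [Algebra A 𝕜] [IsFractionRing A 𝕜]
  (K : Type*) [Field K] [Algebra 𝕜 K] [Algebra A K] [IsScalarTower A 𝕜 K]
  [FiniteDimensional 𝕜 K]

namespace Polynomial

section Semiring
variable {R : Type*} [Semiring R]

theorem coeff_divX_iterate (p : R[X]) (t n : ℕ) : (divX^[t] p).coeff n = p.coeff (n + t) := by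
  induction t generalizing n with
  | zero => rfl
  | succ t ih => rw [Function.iterate_succ_apply', coeff_divX, ih, add_right_comm, add_assoc]

theorem divX_iterate_add (p q : R[X]) (t : ℕ) :
    divX^[t] (p + q) = divX^[t] p + divX^[t] q := by
  ext n; simp only [coeff_divX_iterate, coeff_add]

theorem divX_iterate_C_mul (a : R) (p : R[X]) (t : ℕ) :
    divX^[t] (C a * p) = C a * divX^[t] p := by
  ext n; simp only [coeff_divX_iterate, coeff_C_mul]

theorem divX_iterate_succ_X_mul (p : R[X]) (t : ℕ) : divX^[t + 1] (X * p) = divX^[t] p := by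
  ext n; rw [coeff_divX_iterate, ← add_assoc, coeff_X_mul, coeff_divX_iterate]

theorem divX_iterate_X_pow_mul (p : R[X]) (t : ℕ) : divX^[t] (X ^ t * p) = p := by
  ext n; simp [coeff_divX_iterate, coeff_X_pow_mul']

theorem divX_iterate_reflect {q : R[X]} {N : ℕ} (hq : q.natDegree ≤ N) :
    divX^[N] (reflect N q) = C (q.coeff 0) := by
  ext n
  rw [coeff_divX_iterate, coeff_reflect, coeff_C]
  rcases Nat.eq_zero_or_pos n with rfl | hn
  · simp
  · rw [revAt_eq_self_of_lt (by omega), if_neg hn.ne', coeff_eq_zero_of_natDegree_lt (by omega)]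

theorem natDegree_divX_iterate (p : R[X]) (t : ℕ) : (divX^[t] p).natDegree = p.natDegree - t := by
  induction t with
  | zero => rfl
  | succ t ih => rw [Function.iterate_succ_apply', natDegree_divX_eq_natDegree_tsub_one, ih]; omega

end Semiring

theorem divX_iterate_sub {R : Type*} [Ring R] (p q : R[X]) (t : ℕ) :
    divX^[t] (p - q) = divX^[t] p - divX^[t] q := by
  ext n; simp only [coeff_divX_iterate, coeff_sub]

theorem aeval_divX_iterate_mul_pow_add_sum {R S : Type*} [CommSemiring R] [CommSemiring S]
    [Algebra R S] (x : S) (p : R[X]) (t : ℕ) :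
    aeval x (divX^[t] p) * x ^ t + ∑ i ∈ Finset.range t, p.coeff i • x ^ i = aeval x p := by
  induction t with
  | zero => simp
  | succ t ih =>
    have h := congrArg (aeval x) (divX_mul_X_add (divX^[t] p))
    rw [map_add, map_mul, aeval_X, aeval_C, coeff_divX_iterate, zero_add] at h
    rw [Function.iterate_succ_apply', Finset.sum_range_succ, ← ih, ← h, Algebra.smul_def]
    ring

end Polynomial

section PartialQuotients
variable {R L : Type*} [CommRing R] [CommRing L] [Algebra R L] {x : L}

theorem mul_mem_span_range {ι : Type*} {v : ι → L} {ξ : L}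
    (h : ∀ i, ξ * v i ∈ Submodule.span R (Set.range v)) {m : L}
    (hm : m ∈ Submodule.span R (Set.range v)) : ξ * m ∈ Submodule.span R (Set.range v) :=
  (Submodule.span_le (p := (Submodule.span R (Set.range v)).comap (LinearMap.mulLeft R ξ))).2
    (Set.range_subset_iff.2 h) hm

theorem span_pow_le_adjoin (n : ℕ) :
    Submodule.span R (Set.range fun i : Fin n => x ^ (i : ℕ)) ≤
      Subalgebra.toSubmodule (Algebra.adjoin R {x}) :=
  Submodule.span_le.2 <| Set.range_subset_iff.2 fun _ =>
    pow_mem (Algebra.subset_adjoin (Set.mem_singleton x)) _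

theorem aeval_mem_of_natDegree_lt {n : ℕ} {M : Submodule R L} (hM : ∀ i < n, x ^ i ∈ M)
    {p : R[X]} (hp : p.natDegree < n) : aeval x p ∈ M := by
  rw [aeval_eq_sum_range' hp]
  exact M.sum_mem fun i hi => M.smul_mem _ (hM i (Finset.mem_range.1 hi))

theorem aeval_divX_iterate_mul_pow_mem {n : ℕ} {M : Submodule R L} (hM : ∀ i < n, x ^ i ∈ M)
    {P : R[X]} (hP : aeval x P = 0) (hdeg : P.natDegree ≤ n) (t : ℕ) {j : ℕ} (hj : j < n) :
    aeval x (divX^[t] P) * x ^ j ∈ M := by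
  rcases lt_or_ge j t with hjt | htj
  · rw [mul_comm, ← aeval_X_pow (R := R), ← map_mul]
    refine aeval_mem_of_natDegree_lt hM
      ((natDegree_mul_le_of_le (natDegree_X_pow_le j) le_rfl).trans_lt ?_)
    rw [natDegree_divX_iterate]
    omega
  · have horner := aeval_divX_iterate_mul_pow_add_sum x P t
    rw [hP, add_eq_zero_iff_eq_neg] at horner
    have : aeval x (divX^[t] P) * x ^ j =
        -∑ i ∈ Finset.range t, P.coeff i • x ^ (j - t + i) := by
      rw [← Nat.sub_add_cancel htj, pow_add, ← mul_assoc, mul_comm _ (x ^ (j - t)), mul_assoc,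
        horner, Nat.add_sub_cancel, mul_neg, Finset.mul_sum]
      simp only [mul_smul_comm, pow_add]
    rw [this]
    exact M.neg_mem <| M.sum_mem fun i hi =>
      M.smul_mem _ (hM _ (by have := Finset.mem_range.1 hi; omega))

theorem aeval_divX_iterate_mem_of_dvd {S : Subring L} (hR : ∀ r, algebraMap R L r ∈ S)
    {P : R[X]} (hP : aeval x P = 0) (hPS : ∀ t, aeval x (divX^[t] P) ∈ S) {F : R[X]}
    (hF : P ∣ F) (s : ℕ) : aeval x (divX^[s] F) ∈ S := by
  obtain ⟨Q, rfl⟩ := hF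
  induction Q using Polynomial.induction_on generalizing s with
  | C a => rw [mul_comm, divX_iterate_C_mul, map_mul, aeval_C]; exact S.mul_mem (hR a) (hPS s)
  | add p q hp hq => rw [mul_add, divX_iterate_add, map_add]; exact S.add_mem (hp s) (hq s)
  | monomial m a ih =>
    rw [show P * (C a * X ^ (m + 1)) = X * (P * (C a * X ^ m)) by ring]
    cases s with
    | zero => simp [hP]
    | succ s => rw [divX_iterate_succ_X_mul]; exact ih s

end PartialQuotients

section Adjoin
variable {R L : Type*} [CommRing R] [Field L] [Algebra R L] {x : L}

theorem mem_adjoin_inv_of_mul_pow_mem (hx : x ≠ 0) {n : ℕ} {ξ : L}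
    (h : ξ * x ^ (n - 1) ∈ Submodule.span R (Set.range fun i : Fin n => x ^ (i : ℕ))) :
    ξ ∈ Algebra.adjoin R {x⁻¹} := by
  have hspan : Submodule.span R (Set.range fun i : Fin n => x ^ (i : ℕ)) ≤
      (Subalgebra.toSubmodule (Algebra.adjoin R {x⁻¹})).comap
        (LinearMap.mulLeft R (x⁻¹ ^ (n - 1))) := by
    refine Submodule.span_le.2 <| Set.range_subset_iff.2 fun i => ?_
    show x⁻¹ ^ (n - 1) * x ^ (i : ℕ) ∈ Algebra.adjoin R {x⁻¹}
    rw [← Nat.sub_add_cancel (Nat.le_sub_one_of_lt i.isLt), pow_add, mul_assoc, ← mul_pow,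
      inv_mul_cancel₀ hx, one_pow, mul_one]
    exact pow_mem (Algebra.subset_adjoin (Set.mem_singleton _)) _
  have := hspan h
  rwa [Submodule.mem_comap, LinearMap.mulLeft_apply, mul_left_comm, ← mul_pow,
    inv_mul_cancel₀ hx, one_pow, mul_one] at this

theorem aeval_reflect (hx : x ≠ 0) {q : R[X]} {N : ℕ} (hq : q.natDegree ≤ N) :
    aeval x (reflect N q) = x ^ N * aeval x⁻¹ q := by
  let _ := invertibleOfNonzero (inv_ne_zero hx)
  have h := eval₂_reflect_mul_pow (algebraMap R L) x⁻¹ N q hq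
  rw [invOf_eq_inv, inv_inv] at h
  rw [aeval_def, aeval_def, ← h, mul_left_comm, ← mul_pow, mul_inv_cancel₀ hx, one_pow, mul_one]

theorem mem_of_mem_adjoin_of_mem_adjoin_inv {S : Subring L} (hR : ∀ r, algebraMap R L r ∈ S)
    {P : R[X]} (hP : aeval x P = 0) (hPdvd : ∀ F : R[X], aeval x F = 0 → P ∣ F)
    (hPS : ∀ t, aeval x (divX^[t] P) ∈ S) {ξ : L} (h : ξ ∈ Algebra.adjoin R {x})
    (h' : ξ ∈ Algebra.adjoin R {x⁻¹}) : ξ ∈ S := by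
  rcases eq_or_ne x 0 with rfl | hx
  · rw [inv_zero, Algebra.adjoin_singleton_zero, Algebra.mem_bot] at h'
    obtain ⟨r, rfl⟩ := h'
    exact hR r
  rw [Algebra.adjoin_singleton_eq_range_aeval] at h h'
  obtain ⟨p, rfl⟩ := h
  obtain ⟨q, hq⟩ := h'
  set e := q.natDegree
  have hF : aeval x (X ^ e * p - reflect e q) = 0 := by
    rw [map_sub, aeval_reflect hx le_rfl, map_mul, map_pow, aeval_X]
    exact sub_eq_zero.2 (congrArg _ hq.symm)
  have h := aeval_divX_iterate_mem_of_dvd hR hP hPS (hPdvd _ hF) e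
  rw [divX_iterate_sub, divX_iterate_X_pow_mul, divX_iterate_reflect le_rfl, map_sub,
    aeval_C] at h
  simpa using S.add_mem h (hR (q.coeff 0))

end Adjoin

section Primitive
variable {R F : Type*} [CommRing R] [IsDomain R] [IsGCDMonoid R] [Field F]
  [Algebra R F] [IsFractionRing R F]

theorem exists_isPrimitive_map_eq_C_mul {p : F[X]} (hp : p ≠ 0) :
    ∃ P : R[X], P.IsPrimitive ∧ ∃ c : F, c ≠ 0 ∧ P.map (algebraMap R F) = C c * p := by
  let _ : NormalizedGCDMonoid R := Nonempty.some inferInstance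
  set G := IsLocalization.integerNormalization (nonZeroDivisors R) p
  obtain ⟨b, hb0, hGp⟩ := IsLocalization.integerNormalization_spec (nonZeroDivisors R) p
  have hG : G ≠ 0 := IsFractionRing.integerNormalization_eq_zero_iff.not.2 hp
  have hct : algebraMap R F G.content ≠ 0 := by
    simpa [IsFractionRing.to_map_eq_zero_iff, content_eq_zero_iff] using hG
  have hb : algebraMap R F b ≠ 0 := by
    simpa [IsFractionRing.to_map_eq_zero_iff] using nonZeroDivisors.ne_zero hb0
  refine ⟨G.primPart, G.isPrimitive_primPart, algebraMap R F b / algebraMap R F G.content,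
    div_ne_zero hb hct, mul_left_cancel₀ (C_ne_zero.2 hct) ?_⟩
  calc C (algebraMap R F G.content) * G.primPart.map (algebraMap R F)
      = G.map (algebraMap R F) := by
        rw [← map_C, ← Polynomial.map_mul, ← G.eq_C_content_mul_primPart]
    _ = C (algebraMap R F b) * p := by rw [hGp, Algebra.smul_def, Polynomial.algebraMap_apply]
    _ = C (algebraMap R F G.content) * (C (algebraMap R F b / algebraMap R F G.content) * p) := by
        rw [← mul_assoc, ← C_mul, mul_div_cancel₀ _ hct]

theorem exists_natDegree_eq_minpoly_dvd_of_aeval_eq_zero {L : Type*} [Field L] [Algebra F L]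
    [Algebra R L] [IsScalarTower R F L] {x : L} (hx : IsIntegral F x) :
    ∃ P : R[X], P.natDegree = (minpoly F x).natDegree ∧ aeval x P = 0 ∧
      ∀ Q : R[X], aeval x Q = 0 → P ∣ Q := by
  obtain ⟨P, hP, c, hc, hPmap⟩ := exists_isPrimitive_map_eq_C_mul (R := R) (minpoly.ne_zero hx)
  refine ⟨P, ?_, ?_, fun Q hQ => hP.dvd_of_fraction_map_dvd_fraction_map (K := F) ?_⟩
  · rw [← natDegree_map_eq_of_injective (IsFractionRing.injective R F), hPmap, natDegree_C_mul hc]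
  · rw [← aeval_map_algebraMap F, hPmap, map_mul, minpoly.aeval, mul_zero]
  · rw [hPmap, (isUnit_C.2 hc.isUnit).mul_left_dvd]
    exact minpoly.dvd F x (by rwa [aeval_map_algebraMap])

end Primitive

theorem ring_of_scalars_eq_adjoin_inter_adjoin_inv
    (α : K) :
    (Aring A 𝕜 K α : Set K) =
      (Algebra.adjoin A {α} : Set K) ∩ (Algebra.adjoin A {α⁻¹} : Set K) := by
  have hint : IsIntegral 𝕜 α := .of_finite 𝕜 α
  obtain ⟨P, hPdeg, hP, hPdvd⟩ := exists_natDegree_eq_minpoly_dvd_of_aeval_eq_zero (R := A) hint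
  set n := (minpoly 𝕜 α).natDegree
  have hpow : ∀ i < n, α ^ i ∈ MmodA A 𝕜 K α := fun i hi => Submodule.subset_span ⟨⟨i, hi⟩, rfl⟩
  have hR (a : A) : algebraMap A K a ∈ Aring A 𝕜 K α := fun m hm => by
    rw [← Algebra.smul_def]; exact Submodule.smul_mem _ a hm
  have hPS (t : ℕ) : aeval α (divX^[t] P) ∈ Aring A 𝕜 K α := fun _ =>
    mul_mem_span_range fun j => aeval_divX_iterate_mul_pow_mem hpow hP hPdeg.le t j.isLt
  ext ξ
  refine ⟨fun h => ?_, fun ⟨h, h'⟩ => mem_of_mem_adjoin_of_mem_adjoin_inv hR hP hPdvd hPS h h'⟩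
  have hn : 0 < n := minpoly.natDegree_pos hint
  have hξ : ξ ∈ Algebra.adjoin A {α} := by
    simpa using span_pow_le_adjoin n (h 1 (by simpa using hpow 0 hn))
  refine ⟨hξ, ?_⟩
  rcases eq_or_ne α 0 with rfl | hα
  · rwa [inv_zero]
  · exact mem_adjoin_inv_of_mul_pow_mem hα (h _ (hpow (n - 1) (Nat.sub_lt hn one_pos)))
end
end

section
/- Let 𝕜 be a field of characteristic 0 and K a finite extension of 𝕜 with [K:𝕜] = 3. Let α, β ∈ K with 𝕜(α) = 𝕜(β) = K. Then α and β are GL₂(𝕜)-equivalent, i.e., β = (aα+b)/(cα+d) for some (a b; c d) ∈ GL₂(𝕜). -/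
/-!
A relation `β (cα + d) = aα + b` exists because the four vectors `αβ, β, α, 1` are dependent in a
space of dimension `3`; its denominator is nonzero because `1, α` are independent, and its
determinant is nonzero because a singular Möbius map is constant, while `β` is not in `𝕜`.
-/

open Module

section

variable {𝕜 K : Type*} [Field 𝕜] [Field K] [Algebra 𝕜 K]

theorem notMem_range_algebraMap_of_adjoin_eq_top (h : finrank 𝕜 K ≠ 1) {γ : K}
    (hγ : Algebra.adjoin 𝕜 {γ} = ⊤) : γ ∉ Set.range (algebraMap 𝕜 K) := by
  rintro ⟨x, rfl⟩
  refine h (Subalgebra.bot_eq_top_iff_finrank_eq_one.mp (eq_top_iff.mpr ?_))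
  rw [← hγ, Algebra.adjoin_le_iff, Set.singleton_subset_iff]
  exact Subalgebra.algebraMap_mem _ x

theorem algebraMap_mul_add_algebraMap_eq_zero_iff {γ : K}
    (hγ : γ ∉ Set.range (algebraMap 𝕜 K)) {e f : 𝕜} :
    algebraMap 𝕜 K e * γ + algebraMap 𝕜 K f = 0 ↔ e = 0 ∧ f = 0 := by
  refine ⟨fun h => ?_, by rintro ⟨rfl, rfl⟩; simp⟩
  obtain rfl | he := eq_or_ne e 0
  · simpa using h
  · refine absurd ⟨-f / e, ?_⟩ hγ
    rw [map_div₀, map_neg, div_eq_iff (by simpa using he)]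
    linear_combination -h

theorem div_mem_range_algebraMap_of_det_eq_zero (γ : K) {a b c d : 𝕜}
    (hdet : a * d - b * c = 0) :
    (algebraMap 𝕜 K a * γ + algebraMap 𝕜 K b) / (algebraMap 𝕜 K c * γ + algebraMap 𝕜 K d) ∈
      Set.range (algebraMap 𝕜 K) := by
  obtain hden | hden := eq_or_ne (algebraMap 𝕜 K c * γ + algebraMap 𝕜 K d) 0
  · exact ⟨0, by simp [hden]⟩
  obtain rfl | hc := eq_or_ne c 0
  · have hd : d ≠ 0 := by rintro rfl; simp at hden
    have ha : a = 0 := by simpa [hd] using hdet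
    exact ⟨b / d, by simp [ha]⟩
  · refine ⟨a / c, ?_⟩
    rw [map_div₀, div_eq_div_iff (by simpa using hc) hden]
    have hdetK : algebraMap 𝕜 K a * algebraMap 𝕜 K d = algebraMap 𝕜 K b * algebraMap 𝕜 K c := by
      rw [← map_mul, ← map_mul, sub_eq_zero.mp hdet]
    linear_combination hdetK

theorem exists_mul_affine_eq_affine_of_finrank_le_three [FiniteDimensional 𝕜 K] (h : finrank 𝕜 K ≤ 3) {α : K}
    (hα : α ∉ Set.range (algebraMap 𝕜 K)) (β : K) :
    ∃ a b c d : 𝕜, algebraMap 𝕜 K c * α + algebraMap 𝕜 K d ≠ 0 ∧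
      β * (algebraMap 𝕜 K c * α + algebraMap 𝕜 K d) = algebraMap 𝕜 K a * α + algebraMap 𝕜 K b := by
  have hdep : ¬ LinearIndependent 𝕜 ![α * β, β, α, (1 : K)] := fun hli => by
    have := hli.fintype_card_le_finrank
    simp at this
    omega
  obtain ⟨g, hg, i, hi⟩ := Fintype.not_linearIndependent_iff.mp hdep
  simp only [Fin.sum_univ_four, Algebra.smul_def, Matrix.cons_val, mul_one] at hg
  refine ⟨-g 2, -g 3, g 0, g 1, fun hden => ?_, by simp only [map_neg]; linear_combination hg⟩
  obtain ⟨h0, h1⟩ := (algebraMap_mul_add_algebraMap_eq_zero_iff hα).mp hden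
  obtain ⟨h2, h3⟩ := (algebraMap_mul_add_algebraMap_eq_zero_iff hα).mp (by simpa [h0, h1] using hg)
  fin_cases i <;> simp_all

end

theorem cubic_generators_GL2k_equivalent_general
    (𝕜 : Type*) [Field 𝕜]
    (K : Type*) [Field K] [Algebra 𝕜 K] (h3 : Module.finrank 𝕜 K = 3)
    (α β : K) (hα : Algebra.adjoin 𝕜 {α} = ⊤) (hβ : Algebra.adjoin 𝕜 {β} = ⊤) :
    ∃ a b c d : 𝕜, a * d - b * c ≠ 0 ∧
      β = (algebraMap 𝕜 K a * α + algebraMap 𝕜 K b) /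
          (algebraMap 𝕜 K c * α + algebraMap 𝕜 K d) := by
  have : FiniteDimensional 𝕜 K := FiniteDimensional.of_finrank_eq_succ h3
  have hαr := notMem_range_algebraMap_of_adjoin_eq_top (by omega) hα
  have hβr := notMem_range_algebraMap_of_adjoin_eq_top (by omega) hβ
  obtain ⟨a, b, c, d, hden, hrel⟩ := exists_mul_affine_eq_affine_of_finrank_le_three h3.le hαr β
  have hβ_eq : β = (algebraMap 𝕜 K a * α + algebraMap 𝕜 K b) /
      (algebraMap 𝕜 K c * α + algebraMap 𝕜 K d) := (eq_div_iff hden).mpr hrel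
  refine ⟨a, b, c, d, fun hdet => hβr ?_, hβ_eq⟩
  exact hβ_eq ▸ div_mem_range_algebraMap_of_det_eq_zero α hdet

/-- Let `𝕜` be a field of characteristic `0` and `K` a finite extension of
`𝕜` with `[K:𝕜] = 3`. Let `α, β ∈ K` with `𝕜(α) = 𝕜(β) = K`. Then `α` and `β` are
`GL₂(𝕜)`-equivalent: `β = (aα+b)/(cα+d)` for some `(a b; c d) ∈ GL₂(𝕜)`. -/
theorem cubic_generators_GL2k_equivalent
    (𝕜 : Type*) [Field 𝕜] [CharZero 𝕜]
    (K : Type*) [Field K] [Algebra 𝕜 K] (h3 : Module.finrank 𝕜 K = 3)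
    (α β : K) (hα : Algebra.adjoin 𝕜 {α} = ⊤) (hβ : Algebra.adjoin 𝕜 {β} = ⊤) :
    ∃ a b c d : 𝕜, a * d - b * c ≠ 0 ∧
      β = (algebraMap 𝕜 K a * α + algebraMap 𝕜 K b) /
          (algebraMap 𝕜 K c * α + algebraMap 𝕜 K d) :=
  cubic_generators_GL2k_equivalent_general 𝕜 K h3 α β hα hβ
end

section
/- Let 𝕜 be a field of characteristic 0, K a finite extension of 𝕜 of degree n ≥ 4, and α, β ∈ K with 𝕜(α) = 𝕜(β) = K. Then α and β are GL₂(𝕜)-equivalent if and only if cr_{ijkl}(α) = cr_{ijkl}(β) for all pairwise distinct i, j, k, l ∈ {1,…,n}. -/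
/-!
Applying the embeddings `σ i` to `β = (aα + b)/(cα + d)` shows that every conjugate of `β` is the
image of the corresponding conjugate of `α` under one Möbius transformation, and Möbius
transformations preserve cross ratios.

Conversely, the Möbius transformation over `L` matching three conjugates of `α` with those of `β`
matches all of them once the cross ratios agree, so the points `(σ i α, σ i β)` satisfy one
nontrivial relation `c₀ + c₁ x + c₂ y + c₃ x y = 0` over `L`. Since `n` distinct embeddings of a
degree `n` extension are linearly independent (Dedekind), the matrix `(σ i (b k))` for a basis `b`
of `K` is invertible, so `1, α, β, αβ` are linearly dependent already over `𝕜`. Such a relation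
writes `β` as a Möbius transformation of `α`, nondegenerate because `β ∉ 𝕜`.
-/

noncomputable section

variable (𝕜 : Type*) [Field 𝕜] [CharZero 𝕜]
  (K : Type*) [Field K] [Algebra 𝕜 K]

/-- The cross ratio `cr_{ijkl}(α)` of the conjugates `α^{(i)} = σ i α` of `α`. -/
def crossRatio (L : Type*) [Field L] [Algebra 𝕜 L]
    (σ : Fin (Module.finrank 𝕜 K) → (K →ₐ[𝕜] L)) (α : K)
    (i j k l : Fin (Module.finrank 𝕜 K)) : L :=
  ((σ i α - σ j α) * (σ k α - σ l α)) / ((σ i α - σ k α) * (σ j α - σ l α))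

open Module Function

section Moebius

variable {F : Type*} [Field F]

def moebius (a b c d x : F) : F := (a * x + b) / (c * x + d)

theorem moebius_sub_moebius {a b c d x y : F} (hx : c * x + d ≠ 0) (hy : c * y + d ≠ 0) :
    moebius a b c d x - moebius a b c d y =
      (a * d - b * c) * (x - y) / ((c * x + d) * (c * y + d)) := by
  rw [moebius, moebius, div_sub_div _ _ hx hy]
  ring

theorem crossRatio_moebius {a b c d w x y z : F} (hdet : a * d - b * c ≠ 0)
    (hw : c * w + d ≠ 0) (hx : c * x + d ≠ 0) (hy : c * y + d ≠ 0) (hz : c * z + d ≠ 0) :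
    (moebius a b c d w - moebius a b c d x) * (moebius a b c d y - moebius a b c d z) /
        ((moebius a b c d w - moebius a b c d y) * (moebius a b c d x - moebius a b c d z)) =
      (w - x) * (y - z) / ((w - y) * (x - z)) := by
  simp only [moebius_sub_moebius hw hx, moebius_sub_moebius hy hz, moebius_sub_moebius hw hy,
    moebius_sub_moebius hx hz]
  field_simp

theorem exists_bilinear_relation_of_crossRatio_eq {ι : Type*} {x y : ι → F}
    (hx : Injective x) (hy : Injective y) {i₀ i₁ i₂ : ι}
    (h₀₁ : i₀ ≠ i₁) (h₀₂ : i₀ ≠ i₂) (h₁₂ : i₁ ≠ i₂)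
    (hcr : ∀ p, p ≠ i₀ → p ≠ i₁ → p ≠ i₂ →
      (x i₀ - x i₁) * (x i₂ - x p) / ((x i₀ - x i₂) * (x i₁ - x p)) =
        (y i₀ - y i₁) * (y i₂ - y p) / ((y i₀ - y i₂) * (y i₁ - y p))) :
    ∃ c : Fin 4 → F, c ≠ 0 ∧ ∀ p, c 0 + c 1 * x p + c 2 * y p + c 3 * (x p * y p) = 0 := by
  have hsub {z : ι → F} (hz : Injective z) {i j : ι} (hij : i ≠ j) : z i - z j ≠ 0 :=
    sub_ne_zero.2 (hz.ne hij)
  set A := (x i₀ - x i₁) * (y i₀ - y i₂)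
  set B := (y i₀ - y i₁) * (x i₀ - x i₂)
  set c : Fin 4 → F :=
    ![A * x i₂ * y i₁ - B * x i₁ * y i₂, B * y i₂ - A * y i₁, B * x i₁ - A * x i₂, A - B]
  have hc (X Y : F) : c 0 + c 1 * X + c 2 * Y + c 3 * (X * Y) =
      A * (x i₂ - X) * (y i₁ - Y) - B * (y i₂ - Y) * (x i₁ - X) := by
    simp only [c, Matrix.cons_val]
    ring
  refine ⟨c, fun hc0 => ?_, fun p => ?_⟩
  · have h := hc (x i₂) (y i₀)
    simp only [hc0, Pi.zero_apply, zero_mul, add_zero, sub_self, mul_zero, zero_sub, B] at h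
    exact neg_ne_zero.2 (mul_ne_zero (mul_ne_zero (mul_ne_zero (hsub hy h₀₁) (hsub hx h₀₂))
      (hsub hy h₀₂.symm)) (hsub hx h₁₂)) h.symm
  · rw [hc]
    by_cases hp₀ : p = i₀
    · subst hp₀; ring
    by_cases hp₁ : p = i₁
    · subst hp₁; ring
    by_cases hp₂ : p = i₂
    · subst hp₂; ring
    have h := hcr p hp₀ hp₁ hp₂
    rw [div_eq_div_iff (mul_ne_zero (hsub hx h₀₂) (hsub hx (Ne.symm hp₁)))
      (mul_ne_zero (hsub hy h₀₂) (hsub hy (Ne.symm hp₁)))] at h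
    linear_combination h

end Moebius

section Descent

variable {F E L : Type*} [Field F] [Field E] [Algebra F E] [FiniteDimensional F E]
  [Field L] [Algebra F L] {σ : Fin (finrank F E) → (E →ₐ[F] L)}

theorem det_algHom_apply_finBasis_ne_zero (hσ : Injective σ) :
    (Matrix.of fun i k => σ i (finBasis F E k)).det ≠ 0 := by
  classical
  rw [Ne, ← Matrix.exists_vecMul_eq_zero_iff]
  rintro ⟨v, hv0, hv⟩
  have hvanish (y : E) : ∑ i, v i * σ i y = 0 := by
    rw [← (finBasis F E).sum_repr y]
    simp only [map_sum, map_smul, Finset.mul_sum, mul_smul_comm]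
    rw [Finset.sum_comm]
    refine Finset.sum_eq_zero fun k _ => ?_
    have hk : ∑ i, v i * σ i (finBasis F E k) = 0 := congrFun hv k
    rw [← Finset.smul_sum, hk, smul_zero]
  have hdedekind : LinearIndependent L fun i => ((σ i : E →* L) : E → L) :=
    (linearIndependent_monoidHom E L).comp _ fun i j h =>
      hσ (AlgHom.ext (DFunLike.congr_fun h :))
  exact hv0 (funext (Fintype.linearIndependent_iff.1 hdedekind v
    (funext fun y => by simpa using hvanish y)))

theorem LinearIndependent.algHom_apply (hσ : Injective σ) {ι : Type*} {x : ι → E}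
    (hx : LinearIndependent F x) : LinearIndependent L fun j i => σ i (x j) := by
  set b := finBasis F E
  set M : Matrix _ _ L := Matrix.of fun i k => σ i (b k)
  have hM : LinearMap.ker M.mulVecLin = ⊥ := by
    classical
    rw [LinearMap.ker_eq_bot']
    intro v hv
    by_contra hv0
    exact det_algHom_apply_finBasis_ne_zero hσ (Matrix.exists_mulVec_eq_zero_iff.1 ⟨v, hv0, hv⟩)
  have hcoord : LinearIndependent L fun j => algebraMap F L ∘ b.equivFun (x j) :=
    linearIndependent_algebraMap_comp_iff.2 (hx.map' _ b.equivFun.ker)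
  have hfactor :
      (fun j i => σ i (x j)) = M.mulVecLin ∘ fun j => algebraMap F L ∘ b.equivFun (x j) := by
    ext j i
    conv_lhs => rw [← b.sum_equivFun (x j)]
    simp [M, Matrix.mulVec, dotProduct, map_sum, Algebra.smul_def, mul_comm]
  rw [hfactor]
  exact hcoord.map' _ hM

end Descent

section Generators

variable {F E : Type*} [Field F] [Field E] [Algebra F E]

theorem linearIndependent_one_pair_of_adjoin_eq_top {α : E} (hα : Algebra.adjoin F {α} = ⊤)
    (hn : finrank F E ≠ 1) : LinearIndependent F ![1, α] := by
  refine LinearIndependent.pair_iff.2 fun s t hst => ?_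
  by_cases ht : t = 0
  · subst ht
    simpa using hst
  refine absurd (Subalgebra.bot_eq_top_iff_finrank_eq_one.1 (eq_top_iff.2 ?_)) hn
  rw [← hα, Algebra.adjoin_le_iff, Set.singleton_subset_iff, SetLike.mem_coe,
    Algebra.mem_bot]
  refine ⟨-(s / t), ?_⟩
  rw [Algebra.algebraMap_eq_smul_one, ← inv_smul_smul₀ ht α, eq_neg_of_add_eq_zero_right hst,
    smul_neg, smul_smul, neg_smul, div_eq_inv_mul]

theorem LinearIndependent.eq_zero_of_algebraMap_mul_add_eq_zero {α : E}
    (hα : LinearIndependent F ![1, α]) {s t : F}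
    (h : algebraMap F E s * α + algebraMap F E t = 0) : s = 0 ∧ t = 0 :=
  (LinearIndependent.pair_iff.1 hα t s
    (by rwa [Algebra.smul_def, Algebra.smul_def, mul_one, add_comm])).symm

theorem exists_moebius_of_not_linearIndependent {α β : E} (hα : LinearIndependent F ![1, α])
    (hβ : LinearIndependent F ![1, β]) (h : ¬LinearIndependent F ![1, α, β, α * β]) :
    ∃ a b c d : F, a * d - b * c ≠ 0 ∧
      β = moebius (algebraMap F E a) (algebraMap F E b) (algebraMap F E c) (algebraMap F E d)
        α := by
  obtain ⟨g, hg, i, hi⟩ := Fintype.not_linearIndependent_iff.1 h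
  simp only [Fin.sum_univ_four, Algebra.smul_def, Matrix.cons_val, mul_one] at hg
  have hD : algebraMap F E (g 3) * α + algebraMap F E (g 2) ≠ 0 := by
    intro hD
    obtain ⟨h₃, h₂⟩ := hα.eq_zero_of_algebraMap_mul_add_eq_zero hD
    obtain ⟨h₁, h₀⟩ := hα.eq_zero_of_algebraMap_mul_add_eq_zero (s := g 1) (t := g 0)
      (by linear_combination hg - β * hD)
    fin_cases i <;> contradiction
  have hβD : β * (algebraMap F E (g 3) * α + algebraMap F E (g 2)) =
      algebraMap F E (-g 1) * α + algebraMap F E (-g 0) := by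
    simp only [map_neg]
    linear_combination hg
  refine ⟨-g 1, -g 0, g 3, g 2, fun hdet => ?_, (eq_div_iff hD).2 hβD⟩
  -- a Möbius transformation of determinant zero is constant, which would put `β` in `F`
  have hdet' : algebraMap F E (g 0) * algebraMap F E (g 3) -
      algebraMap F E (g 1) * algebraMap F E (g 2) = 0 := by
    rw [← map_mul, ← map_mul, ← map_sub, ← map_zero (algebraMap F E)]
    exact congrArg _ (by linear_combination hdet)
  rw [map_neg, map_neg] at hβD
  have h₃₁ : (algebraMap F E (g 3) * β + algebraMap F E (g 1)) *
      (algebraMap F E (g 3) * α + algebraMap F E (g 2)) = 0 := by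
    linear_combination algebraMap F E (g 3) * hβD - hdet'
  have h₂₀ : (algebraMap F E (g 2) * β + algebraMap F E (g 0)) *
      (algebraMap F E (g 3) * α + algebraMap F E (g 2)) = 0 := by
    linear_combination algebraMap F E (g 2) * hβD + α * hdet'
  obtain ⟨h₃, -⟩ :=
    hβ.eq_zero_of_algebraMap_mul_add_eq_zero ((mul_eq_zero.1 h₃₁).resolve_right hD)
  obtain ⟨h₂, -⟩ :=
    hβ.eq_zero_of_algebraMap_mul_add_eq_zero ((mul_eq_zero.1 h₂₀).resolve_right hD)
  exact hD (by rw [h₃, h₂, map_zero, zero_mul, add_zero])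

end Generators

theorem GL2k_equivalent_iff_crossRatios_eq
    (hn : 4 ≤ Module.finrank 𝕜 K)
    (α β : K) (hα : Algebra.adjoin 𝕜 {α} = ⊤) (hβ : Algebra.adjoin 𝕜 {β} = ⊤)
    (L : Type*) [Field L] [Algebra 𝕜 L]
    (σ : Fin (Module.finrank 𝕜 K) → (K →ₐ[𝕜] L)) (hσ : Function.Injective σ) :
    (∃ a b c d : 𝕜, a * d - b * c ≠ 0 ∧
        β = (algebraMap 𝕜 K a * α + algebraMap 𝕜 K b) /
            (algebraMap 𝕜 K c * α + algebraMap 𝕜 K d)) ↔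
      (∀ i j k l : Fin (Module.finrank 𝕜 K),
        i ≠ j → i ≠ k → i ≠ l → j ≠ k → j ≠ l → k ≠ l →
        crossRatio 𝕜 K L σ α i j k l = crossRatio 𝕜 K L σ β i j k l) := by
  have hα₂ := linearIndependent_one_pair_of_adjoin_eq_top hα (by omega)
  have hβ₂ := linearIndependent_one_pair_of_adjoin_eq_top hβ (by omega)
  constructor
  · rintro ⟨a, b, c, d, hdet, rfl⟩ i j k l - - - - - -
    have hD (p) : σ p (algebraMap 𝕜 K c * α + algebraMap 𝕜 K d) ≠ 0 :=
      (map_ne_zero_iff _ (σ p).injective).2 fun h => hdet <| by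
        obtain ⟨rfl, rfl⟩ := hα₂.eq_zero_of_algebraMap_mul_add_eq_zero h
        ring
    have hdet' :
        algebraMap 𝕜 L a * algebraMap 𝕜 L d - algebraMap 𝕜 L b * algebraMap 𝕜 L c ≠ 0 := by
      rw [← map_mul, ← map_mul, ← map_sub]
      exact (map_ne_zero _).2 hdet
    simp only [map_add, map_mul, AlgHom.commutes] at hD
    simp only [crossRatio, map_div₀, map_add, map_mul, AlgHom.commutes]
    exact (crossRatio_moebius hdet' (hD i) (hD j) (hD k) (hD l)).symm
  · intro hcr
    have : FiniteDimensional 𝕜 K := Module.finite_of_finrank_pos (by omega)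
    have hconj {γ : K} (hγ : Algebra.adjoin 𝕜 {γ} = ⊤) : Function.Injective fun p => σ p γ :=
      fun p q h => hσ (AlgHom.ext_of_adjoin_eq_top hγ (Set.eqOn_singleton.2 h))
    have he := (Fin.castLEEmb hn).injective
    obtain ⟨c, hc0, hc⟩ := exists_bilinear_relation_of_crossRatio_eq (hconj hα) (hconj hβ)
      (he.ne (by decide : (0 : Fin 4) ≠ 1)) (he.ne (by decide : (0 : Fin 4) ≠ 2))
      (he.ne (by decide : (1 : Fin 4) ≠ 2))
      fun p h₀ h₁ h₂ => hcr _ _ _ p (he.ne (by decide)) (he.ne (by decide)) (Ne.symm h₀)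
        (he.ne (by decide)) (Ne.symm h₁) (Ne.symm h₂)
    refine exists_moebius_of_not_linearIndependent hα₂ hβ₂ fun hind => hc0 <| funext <|
      Fintype.linearIndependent_iff.1 (hind.algHom_apply hσ) c (funext fun p => ?_)
    simpa [Fin.sum_univ_four] using hc p
end
end
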